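/- Suppose F : S_g → C is holomorphic, satisfies the weight-κ modular transformation law F(γ⟨τ⟩) = det(cτ+d)^κ F(τ), and vanishes identically on a Γ_g-invariant complex submanifold H ⊂ S_g. Then the gradient matrix ∂_τ F (the symmetric matrix of partial derivatives ∂F/∂τ_{ij}, with off-diagonal entries weighted by 1/2), restricted to H, transforms as ∂_τ F(γ⟨τ⟩) = det(cτ+d)^κ (cτ+d) (∂_τ F(τ)) (cτ+d)^t for all γ ∈ Γ_g and τ ∈ H. -/

import Mathlib

open Matrix

attribute [local instance] Matrix.normedAddCommGroup Matrix.normedSpace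

/-- The Siegel upper half-space of degree g. -/
def SiegelSpace (g : ℕ) : Set (Matrix (Fin g) (Fin g) ℂ) :=
  {τ | τᵀ = τ ∧ (τ.map Complex.im).PosDef}

/-- The symplectic group Sp(2g, ℤ). -/
structure SpZ (g : ℕ) where
  a : Matrix (Fin g) (Fin g) ℤ
  b : Matrix (Fin g) (Fin g) ℤ
  c : Matrix (Fin g) (Fin g) ℤ
  d : Matrix (Fin g) (Fin g) ℤ
  hac : aᵀ * c = cᵀ * a
  hbd : bᵀ * d = dᵀ * b
  had : aᵀ * d - cᵀ * b = 1

/-- The automorphy factor cτ + d. -/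
noncomputable def SpZ.cd {g : ℕ} (γ : SpZ g) (τ : Matrix (Fin g) (Fin g) ℂ) :
    Matrix (Fin g) (Fin g) ℂ :=
  γ.c.map (Int.cast) * τ + γ.d.map (Int.cast)

/-- The action γ⟨τ⟩ = (aτ+b)(cτ+d)⁻¹. -/
noncomputable def SpZ.act {g : ℕ} (γ : SpZ g) (τ : Matrix (Fin g) (Fin g) ℂ) :
    Matrix (Fin g) (Fin g) ℂ :=
  (γ.a.map (Int.cast) * τ + γ.b.map (Int.cast)) * (γ.cd τ)⁻¹

/-!
Fix `τ ∈ H` and a real symmetric `Y`; the real line `t ↦ τ + tY` stays in `S_g`, since it does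
not move `Im τ`. Differentiating `F(γ⟨τ + tY⟩) = det(c(τ + tY) + d)^κ F(τ + tY)` at `t = 0`, the
derivative of the automorphy factor is multiplied by `F(τ) = 0` and drops out, while the
symplectic relations give `γ⟨τ₁⟩ - γ⟨τ₂⟩ = ((cτ₁ + d)ᵀ)⁻¹ (τ₁ - τ₂) (cτ₂ + d)⁻¹`, so that the line
is mapped with velocity `((cτ + d)ᵀ)⁻¹ Y (cτ + d)⁻¹`. This gives
`tr(∂F(γ⟨τ⟩) ((cτ + d)ᵀ)⁻¹ Y (cτ + d)⁻¹) = det(cτ + d)^κ tr(∂F(τ) Y)` for every real symmetric `Y`,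
and real symmetric matrices separate symmetric complex matrices under the trace pairing.
-/

open Filter Topology

section Slope

variable {𝕜 E : Type*} [NontriviallyNormedField 𝕜] [NormedAddCommGroup E] [NormedSpace 𝕜 E]
  {x : 𝕜}

theorem hasDerivAt_of_eventually_eq_add_smul {f M : 𝕜 → E}
    (hf : ∀ᶠ t in 𝓝 x, f t = f x + (t - x) • M t) (hM : ContinuousAt M x) :
    HasDerivAt f (M x) x := by
  rw [hasDerivAt_iff_tendsto_slope]
  refine (hM.tendsto.mono_left nhdsWithin_le_nhds).congr' ?_
  filter_upwards [nhdsWithin_le_nhds hf, self_mem_nhdsWithin] with t ht hne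
  rw [slope_def_module, ht, add_sub_cancel_left, smul_smul,
    inv_mul_cancel₀ (sub_ne_zero.2 hne), one_smul]

theorem ContinuousAt.hasDerivAt_smul_of_eq_zero {𝕜' : Type*} [NontriviallyNormedField 𝕜']
    [NormedAlgebra 𝕜 𝕜'] [NormedSpace 𝕜' E] [IsScalarTower 𝕜 𝕜' E]
    {u : 𝕜 → 𝕜'} {v : 𝕜 → E} {v' : E}
    (hu : ContinuousAt u x) (hv : HasDerivAt v v' x) (hv0 : v x = 0) :
    HasDerivAt (fun t => u t • v t) (u x • v') x := by
  rw [hasDerivAt_iff_tendsto_slope] at hv ⊢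
  refine ((hu.tendsto.mono_left nhdsWithin_le_nhds).smul hv).congr fun t => ?_
  simp only [slope_def_module, hv0, smul_zero, sub_zero]
  rw [smul_comm]

end Slope

theorem Matrix.transpose_mul_sub_transpose_mul_of_symplectic {n R : Type*} [Fintype n]
    [DecidableEq n] [CommRing R] {A B C D τ₁ τ₂ : Matrix n n R} (hAC : Aᵀ * C = Cᵀ * A)
    (hBD : Bᵀ * D = Dᵀ * B) (hAD : Aᵀ * D - Cᵀ * B = 1) (hτ₁ : τ₁ᵀ = τ₁) :
    (A * τ₁ + B)ᵀ * (C * τ₂ + D) - (C * τ₁ + D)ᵀ * (A * τ₂ + B) = τ₁ - τ₂ := by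
  have hDA : Dᵀ * A - Bᵀ * C = 1 := by
    simpa [transpose_sub, transpose_mul] using congrArg transpose hAD
  calc (A * τ₁ + B)ᵀ * (C * τ₂ + D) - (C * τ₁ + D)ᵀ * (A * τ₂ + B)
      = τ₁ * (Aᵀ * C - Cᵀ * A) * τ₂ + τ₁ * (Aᵀ * D - Cᵀ * B)
          - (Dᵀ * A - Bᵀ * C) * τ₂ + (Bᵀ * D - Dᵀ * B) := by
        simp only [transpose_add, transpose_mul, hτ₁]; noncomm_ring
    _ = τ₁ - τ₂ := by rw [hAC, hBD, hAD, hDA]; noncomm_ring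

theorem Matrix.conjTranspose_intCast_mul_add {n : Type*} [Fintype n] {M N : Matrix n n ℤ}
    {τ : Matrix n n ℂ} (hτ : τᵀ = τ) :
    (M.map Int.cast * τ + N.map Int.cast)ᴴ = (M.map Int.cast * τᴴ + N.map Int.cast)ᵀ := by
  have hτ' : τᴴᵀ = τᴴ := by rw [← conjTranspose_transpose_eq_transpose_conjTranspose, hτ]
  have hint (K : Matrix n n ℤ) : (K.map (Int.cast : ℤ → ℂ))ᴴ = (K.map Int.cast)ᵀ := by
    ext; simp
  simp only [conjTranspose_add, conjTranspose_mul, transpose_add, transpose_mul, hτ', hint]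

theorem Matrix.PosDef.re_star_dotProduct_map_ofReal_mulVec_pos {n : Type*} [Fintype n]
    {N : Matrix n n ℝ} (hN : N.PosDef) {v : n → ℂ} (hv : v ≠ 0) :
    0 < (star v ⬝ᵥ (N.map Complex.ofReal *ᵥ v)).re := by
  set x : n → ℝ := fun i => (v i).re
  set y : n → ℝ := fun i => (v i).im
  have hre : (star v ⬝ᵥ (N.map Complex.ofReal *ᵥ v)).re = x ⬝ᵥ (N *ᵥ x) + y ⬝ᵥ (N *ᵥ y) := by
    simp only [dotProduct, mulVec, Complex.re_sum, Finset.mul_sum, ← Finset.sum_add_distrib]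
    refine Finset.sum_congr rfl fun i _ => Finset.sum_congr rfl fun j _ => ?_
    simp [x, y, Complex.mul_re]
  have hxy : x ≠ 0 ∨ y ≠ 0 := by
    by_contra! h
    exact hv (funext fun i => Complex.ext (congrFun h.1 i) (congrFun h.2 i))
  have hx := hN.posSemidef.dotProduct_mulVec_nonneg x
  have hy := hN.posSemidef.dotProduct_mulVec_nonneg y
  rw [hre]
  rcases hxy with h | h
  all_goals
    have := hN.dotProduct_mulVec_pos h
    simp only [star_trivial] at *
    linarith

theorem Matrix.IsSymm.mul_mul_transpose {n R : Type*} [Fintype n] [CommSemiring R]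
    {A : Matrix n n R} (hA : A.IsSymm) (B : Matrix n n R) : (B * A * Bᵀ).IsSymm := by
  simp [IsSymm, transpose_mul, hA.eq, Matrix.mul_assoc]

theorem Matrix.ext_of_isSymm_of_trace_mul_real {n : Type*} [Fintype n] [DecidableEq n]
    {P Q : Matrix n n ℂ} (hP : P.IsSymm) (hQ : Q.IsSymm)
    (h : ∀ Y : Matrix n n ℝ, Y.IsSymm →
      (P * Y.map Complex.ofReal).trace = (Q * Y.map Complex.ofReal).trace) :
    P = Q := by
  refine Matrix.ext fun i j => ?_
  have hij := h (single i j 1 + single j i 1) (by simp [IsSymm, add_comm])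
  have hs (a b : n) : (single a b (1 : ℝ)).map Complex.ofReal = single a b 1 :=
    (map_single a b (1 : ℝ) Complex.ofRealHom).trans (by simp)
  rw [Matrix.map_add _ Complex.ofReal_add, hs, hs] at hij
  simp only [Matrix.mul_add, trace_add, trace_mul_single, MulOpposite.op_one, one_smul] at hij
  rw [hP.apply, hQ.apply] at hij
  linear_combination hij / 2

theorem add_smul_map_ofReal_mem_siegelSpace {g : ℕ} {τ : Matrix (Fin g) (Fin g) ℂ}
    (hτ : τ ∈ SiegelSpace g) {Y : Matrix (Fin g) (Fin g) ℝ} (hY : Y.IsSymm) (t : ℝ) :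
    τ + t • Y.map Complex.ofReal ∈ SiegelSpace g := by
  obtain ⟨hsym, hpos⟩ := hτ
  refine ⟨by rw [transpose_add, transpose_smul, hsym, ← transpose_map, hY.eq], ?_⟩
  convert hpos using 1
  ext
  simp

namespace SpZ

variable {g : ℕ} (γ : SpZ g)

noncomputable def num (τ : Matrix (Fin g) (Fin g) ℂ) : Matrix (Fin g) (Fin g) ℂ :=
  γ.a.map Int.cast * τ + γ.b.map Int.cast

theorem num_transpose_mul_cd_sub {τ₁ τ₂ : Matrix (Fin g) (Fin g) ℂ} (hτ₁ : τ₁ᵀ = τ₁) :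
    (γ.num τ₁)ᵀ * γ.cd τ₂ - (γ.cd τ₁)ᵀ * γ.num τ₂ = τ₁ - τ₂ := by
  have cast {M N : Matrix (Fin g) (Fin g) ℤ} (h : M = N) :
      M.map (Int.cast : ℤ → ℂ) = N.map Int.cast :=
    congrArg (Matrix.map · Int.cast) h
  refine transpose_mul_sub_transpose_mul_of_symplectic ?_ ?_ ?_ hτ₁
  · simpa [map_mul_intCast, transpose_map] using cast γ.hac
  · simpa [map_mul_intCast, transpose_map] using cast γ.hbd
  · simpa [map_mul_intCast, Matrix.map_sub, transpose_map] using cast γ.had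

theorem transpose_cd_mul_act {τ : Matrix (Fin g) (Fin g) ℂ} (hτ : τᵀ = τ)
    (hdet : (γ.cd τ).det ≠ 0) : (γ.cd τ)ᵀ * γ.act τ = (γ.num τ)ᵀ := by
  have h := γ.num_transpose_mul_cd_sub (τ₂ := τ) hτ
  rw [sub_self, sub_eq_zero] at h
  rw [act, ← num, ← Matrix.mul_assoc, ← h, mul_nonsing_inv_cancel_right _ _ hdet.isUnit]

theorem act_sub_act {τ₁ τ₂ : Matrix (Fin g) (Fin g) ℂ} (hτ₁ : τ₁ᵀ = τ₁)
    (hdet₁ : (γ.cd τ₁).det ≠ 0) (hdet₂ : (γ.cd τ₂).det ≠ 0) :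
    γ.act τ₁ - γ.act τ₂ = ((γ.cd τ₁)ᵀ)⁻¹ * (τ₁ - τ₂) * (γ.cd τ₂)⁻¹ := by
  have hnum : γ.act τ₂ * γ.cd τ₂ = γ.num τ₂ := nonsing_inv_mul_cancel_right _ _ hdet₂.isUnit
  have hdet₁' : (γ.cd τ₁)ᵀ.det ≠ 0 := by rwa [det_transpose]
  have key : (γ.cd τ₁)ᵀ * (γ.act τ₁ - γ.act τ₂) * γ.cd τ₂ = τ₁ - τ₂ := by
    rw [Matrix.mul_sub, Matrix.sub_mul, γ.transpose_cd_mul_act hτ₁ hdet₁,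
      Matrix.mul_assoc _ _ (γ.cd τ₂), hnum, γ.num_transpose_mul_cd_sub hτ₁]
  rw [← key, Matrix.mul_assoc, mul_nonsing_inv_cancel_right _ _ hdet₂.isUnit,
    nonsing_inv_mul_cancel_left _ _ hdet₁'.isUnit]

/-- Taking `τ₁ = τᴴ` in the symplectic identity gives
`(aτ + b)ᴴ (cτ + d) - (cτ + d)ᴴ (aτ + b) = τᴴ - τ = -2i Im τ`, so a kernel vector of `cτ + d`
would be isotropic for the positive definite `Im τ`. -/
theorem cd_det_ne_zero {τ : Matrix (Fin g) (Fin g) ℂ} (hτ : τ ∈ SiegelSpace g) :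
    (γ.cd τ).det ≠ 0 := by
  obtain ⟨hsym, hpos⟩ := hτ
  intro h0
  obtain ⟨v, hv, hcdv⟩ := exists_mulVec_eq_zero_iff.2 h0
  have hτH : τᴴᵀ = τᴴ := by rw [← conjTranspose_transpose_eq_transpose_conjTranspose, hsym]
  have hzero : star v ⬝ᵥ ((τᴴ - τ) *ᵥ v) = 0 := by
    have hnum : (γ.num τᴴ)ᵀ = (γ.num τ)ᴴ := (conjTranspose_intCast_mul_add hsym).symm
    have hcd : (γ.cd τᴴ)ᵀ = (γ.cd τ)ᴴ := (conjTranspose_intCast_mul_add hsym).symm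
    rw [← γ.num_transpose_mul_cd_sub hτH, hnum, hcd, sub_mulVec, dotProduct_sub,
      ← mulVec_mulVec, ← mulVec_mulVec, hcdv, dotProduct_mulVec _ (γ.cd τ)ᴴ, ← star_mulVec,
      hcdv]
    simp
  have him : τᴴ - τ = (-2 * Complex.I) • (τ.map Complex.im).map Complex.ofReal := by
    ext i j
    have hji : τ j i = τ i j := congrFun (congrFun hsym i) j
    simp [hji, Complex.ext_iff]
    ring
  rw [him, smul_mulVec, dotProduct_smul, smul_eq_mul, mul_eq_zero] at hzero
  rcases hzero with h | h
  · simp [Complex.I_ne_zero] at h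
  · have := hpos.re_star_dotProduct_map_ofReal_mulVec_pos hv
    rw [h, Complex.zero_re] at this
    exact this.false

theorem continuous_cd : Continuous γ.cd := by
  unfold cd; fun_prop

theorem hasDerivAt_act_add_smul {τ Y : Matrix (Fin g) (Fin g) ℂ} (hτ : τᵀ = τ) (hY : Yᵀ = Y)
    (hdet : (γ.cd τ).det ≠ 0) :
    HasDerivAt (fun t : ℝ => γ.act (τ + t • Y)) (((γ.cd τ)ᵀ)⁻¹ * Y * (γ.cd τ)⁻¹) 0 := by
  set M : ℝ → Matrix (Fin g) (Fin g) ℂ := fun t => ((γ.cd (τ + t • Y))ᵀ)⁻¹ * Y * (γ.cd τ)⁻¹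
  have hline : Continuous fun t : ℝ => γ.cd (τ + t • Y) := γ.continuous_cd.comp (by fun_prop)
  have hM : ContinuousAt M 0 := by
    have hinv : ContinuousAt Inv.inv (γ.cd τ)ᵀ := by
      refine continuousAt_matrix_inv _ ?_
      simpa [Ring.inverse_eq_inv'] using hdet
    have hinv' : ContinuousAt (fun t : ℝ => ((γ.cd (τ + t • Y))ᵀ)⁻¹) 0 :=
      hinv.comp_of_eq hline.matrix_transpose.continuousAt (by simp)
    exact (hinv'.mul continuousAt_const).mul continuousAt_const
  have hdet_near : ∀ᶠ t in 𝓝 (0 : ℝ), (γ.cd (τ + t • Y)).det ≠ 0 :=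
    hline.matrix_det.continuousAt.eventually_ne (by simpa using hdet)
  have hM0 : M 0 = ((γ.cd τ)ᵀ)⁻¹ * Y * (γ.cd τ)⁻¹ := by simp [M]
  rw [← hM0]
  refine hasDerivAt_of_eventually_eq_add_smul ?_ hM
  filter_upwards [hdet_near] with t ht
  have hsym : (τ + t • Y)ᵀ = τ + t • Y := by rw [transpose_add, transpose_smul, hτ, hY]
  rw [zero_smul, add_zero, sub_zero, ← sub_eq_iff_eq_add', γ.act_sub_act hsym ht hdet,
    add_sub_cancel_left, Matrix.mul_smul, Matrix.smul_mul]

theorem fderiv_apply_act_eq_of_eq_zero {F : Matrix (Fin g) (Fin g) ℂ → ℂ} {κ : ℤ}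
    (hmod : ∀ τ ∈ SiegelSpace g, F (γ.act τ) = (γ.cd τ).det ^ κ * F τ)
    {τ : Matrix (Fin g) (Fin g) ℂ} (hτ : τ ∈ SiegelSpace g) (hFτ : DifferentiableAt ℂ F τ)
    (hFγτ : DifferentiableAt ℂ F (γ.act τ)) (hF0 : F τ = 0)
    {Y : Matrix (Fin g) (Fin g) ℝ} (hY : Y.IsSymm) :
    fderiv ℂ F (γ.act τ) (((γ.cd τ)ᵀ)⁻¹ * Y.map Complex.ofReal * (γ.cd τ)⁻¹)
      = (γ.cd τ).det ^ κ * fderiv ℂ F τ (Y.map Complex.ofReal) := by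
  have hdet := γ.cd_det_ne_zero hτ
  set Y' := Y.map Complex.ofReal
  have hline : HasDerivAt (fun t : ℝ => τ + t • Y') Y' 0 :=
    (((hasDerivAt_id (0 : ℝ)).smul_const _).const_add τ).congr_deriv (one_smul ℝ _)
  have hlhs : HasDerivAt (fun t : ℝ => F (γ.act (τ + t • Y')))
      (fderiv ℂ F (γ.act τ) (((γ.cd τ)ᵀ)⁻¹ * Y' * (γ.cd τ)⁻¹)) 0 :=
    (hFγτ.hasFDerivAt.restrictScalars ℝ).comp_hasDerivAt_of_eq 0
      (γ.hasDerivAt_act_add_smul hτ.1 (hY.map _) hdet) (by simp)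
  have hrhs : HasDerivAt (fun t : ℝ => (γ.cd (τ + t • Y')).det ^ κ * F (τ + t • Y'))
      ((γ.cd τ).det ^ κ * fderiv ℂ F τ Y') 0 := by
    have hu : ContinuousAt (fun t : ℝ => (γ.cd (τ + t • Y')).det ^ κ) 0 :=
      ((γ.continuous_cd.comp (by fun_prop)).matrix_det.continuousAt).zpow₀ κ
        (Or.inl (by simpa using hdet))
    have hv := (hFτ.hasFDerivAt.restrictScalars ℝ).comp_hasDerivAt_of_eq 0 hline (by simp)
    exact (hu.hasDerivAt_smul_of_eq_zero hv (by simpa using hF0)).congr_deriv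
      (by rw [zero_smul, add_zero]; rfl)
  refine hlhs.unique (hrhs.congr_of_eventuallyEq (Eventually.of_forall fun t => ?_))
  exact hmod _ (add_smul_map_ofReal_mem_siegelSpace hτ hY t)

end SpZ

theorem gradient_transformation_general (g : ℕ) (κ : ℤ)
    (F : Matrix (Fin g) (Fin g) ℂ → ℂ) (hol : Differentiable ℂ F)
    (DF : Matrix (Fin g) (Fin g) ℂ → Matrix (Fin g) (Fin g) ℂ)
    (hDFsym : ∀ τ, (DF τ)ᵀ = DF τ)
    (hDF : ∀ τ, ∀ X : Matrix (Fin g) (Fin g) ℂ, Xᵀ = X →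
      fderiv ℂ F τ X = ((DF τ) * X).trace)
    (H : Set (Matrix (Fin g) (Fin g) ℂ)) (hHS : H ⊆ SiegelSpace g)
    (hmod : ∀ γ : SpZ g, ∀ τ ∈ SiegelSpace g,
      F (γ.act τ) = (γ.cd τ).det ^ κ * F τ)
    (hvan : ∀ τ ∈ H, F τ = 0) :
    ∀ γ : SpZ g, ∀ τ ∈ H,
      DF (γ.act τ) = (γ.cd τ).det ^ κ • ((γ.cd τ) * DF τ * (γ.cd τ)ᵀ) := by
  intro γ τ hτH
  have hτ := hHS hτH
  set C := γ.cd τ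
  have hC : IsUnit C.det := (γ.cd_det_ne_zero hτ).isUnit
  have hconj : C⁻¹ * DF (γ.act τ) * C⁻¹ᵀ = C.det ^ κ • DF τ := by
    refine ext_of_isSymm_of_trace_mul_real (IsSymm.mul_mul_transpose (hDFsym _) _)
      (IsSymm.smul (hDFsym τ) _) fun Y hY => ?_
    have hsym : (C⁻¹ᵀ * Y.map Complex.ofReal * C⁻¹).IsSymm := by
      simpa only [transpose_transpose] using (hY.map Complex.ofReal).mul_mul_transpose C⁻¹ᵀ
    have h := γ.fderiv_apply_act_eq_of_eq_zero (hmod γ) hτ (hol τ) (hol _) (hvan τ hτH) hY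
    rw [← transpose_nonsing_inv, hDF _ _ hsym, hDF _ _ (hY.map _)] at h
    rw [smul_mul, trace_smul, smul_eq_mul, ← h]
    simp only [Matrix.mul_assoc]
    rw [trace_mul_comm]
    simp only [Matrix.mul_assoc]
  calc DF (γ.act τ) = C * (C⁻¹ * DF (γ.act τ) * C⁻¹ᵀ) * Cᵀ := by
        have hCt : IsUnit Cᵀ.det := by rwa [det_transpose]
        rw [transpose_nonsing_inv]
        simp only [Matrix.mul_assoc, nonsing_inv_mul _ hCt, mul_nonsing_inv_cancel_left _ _ hC,
          Matrix.mul_one]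
    _ = C.det ^ κ • (C * DF τ * Cᵀ) := by rw [hconj, Matrix.mul_smul, Matrix.smul_mul]

/-- let F be holomorphic on the space of g×g complex matrices,
satisfying the weight-κ modular transformation law on the Siegel upper
half-space S_g, and vanishing identically on a Γ_g-invariant subset H ⊆ S_g.
Let ∂_τF be the symmetric gradient matrix of F, characterized by
dF(τ)[X] = tr(∂_τF(τ)·X) for symmetric directions X (this weights the
off-diagonal partial derivatives by 1/2).  Then on H the gradient transforms
as ∂_τF(γ⟨τ⟩) = det(cτ+d)^κ (cτ+d)(∂_τF(τ))(cτ+d)ᵀ for all γ ∈ Γ_g. -/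
theorem gradient_transformation (g : ℕ) (κ : ℤ)
    (F : Matrix (Fin g) (Fin g) ℂ → ℂ) (hol : Differentiable ℂ F)
    (DF : Matrix (Fin g) (Fin g) ℂ → Matrix (Fin g) (Fin g) ℂ)
    (hDFsym : ∀ τ, (DF τ)ᵀ = DF τ)
    (hDF : ∀ τ, ∀ X : Matrix (Fin g) (Fin g) ℂ, Xᵀ = X →
      fderiv ℂ F τ X = ((DF τ) * X).trace)
    (H : Set (Matrix (Fin g) (Fin g) ℂ)) (hHS : H ⊆ SiegelSpace g)
    (hHinv : ∀ γ : SpZ g, ∀ τ ∈ H, γ.act τ ∈ H)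
    (hmod : ∀ γ : SpZ g, ∀ τ ∈ SiegelSpace g,
      F (γ.act τ) = (γ.cd τ).det ^ κ * F τ)
    (hvan : ∀ τ ∈ H, F τ = 0) :
    ∀ γ : SpZ g, ∀ τ ∈ H,
      DF (γ.act τ) = (γ.cd τ).det ^ κ • ((γ.cd τ) * DF τ * (γ.cd τ)ᵀ) :=
  gradient_transformation_general g κ F hol DF hDFsym hDF H hHS hmod hvan
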